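/- Let d ≥ 3 and n_1,...,n_d ≥ 2 be integers, let N = ∏_{i=1}^{d-1} n_i and let M be the number of edges of Grid(n_1,...,n_{d-1}). Let f̃ be a bijection from [n_1]×⋯×[n_{d-1}] onto {1,...,N} and let g̃ be a bijection from the edge set of Grid(n_1,...,n_{d-1}) onto {1,...,M}. Define g on the edges of Grid(n_1,...,n_d) as follows. For an edge e = {x,y} with y_d = x_d+1 (all other coordinates equal): g(e) = f̃(x_1,...,x_{d-1}) + n_d·M + (x_d-1)N if x_1+⋯+x_{d-1} is odd, and g(e) = f̃(x_1,...,x_{d-1}) + n_d·M + (n_d-1-x_d)N if x_1+⋯+x_{d-1} is even. For an edge e = {x,y} with y_i = x_i+1, i ≤ d-1 (all other coordinates equal), with ẽ = {(x_1,...,x_{d-1}),(y_1,...,y_{d-1})}: if d is odd, g(e) = g̃(ẽ) + (x_d-1)M if i is odd and g(e) = g̃(ẽ) + (n_d-x_d)M if i is even; if d is even, then for i ≤ d-2 the same rule applies, and for i = d-1, g(e) = g̃(ẽ) + (x_d-1)M if x_1+⋯+x_{d-2} is odd and g(e) = g̃(ẽ) + (n_d-x_d)M if x_1+⋯+x_{d-2}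 is even. Then g is a bijection from the edge set of Grid(n_1,...,n_d) onto {1,...,n_d·M + (n_d-1)·N}. -/

import Mathlib

/-- The grid graph `Grid(n 0, …, n (d-1))`: vertices are tuples whose `i`-th coordinate
ranges over a set of size `n i` (we use `Fin (n i) = {0, …, n i - 1}`, corresponding to the
coordinate `[n i] = {1, …, n i}` via `v ↦ v + 1`); two vertices are adjacent iff they differ
by exactly one in one coordinate and agree in all others. -/
def gridGraph {d : ℕ} (n : Fin d → ℕ) : SimpleGraph (∀ i, Fin (n i)) where
  Adj x y := ∃ i, ((x i : ℕ) + 1 = (y i : ℕ) ∨ (y i : ℕ) + 1 = (x i : ℕ)) ∧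
    ∀ j, j ≠ i → x j = y j
  symm := by
    constructor
    rintro x y ⟨i, h, hj⟩
    exact ⟨i, h.symm, fun j hji => (hj j hji).symm⟩
  loopless := by
    constructor
    rintro x ⟨i, h, -⟩
    rcases h with h | h <;> omega

/-- `f` is an `H`-magic vertex labeling of `G` with `H`-magic sum `c`:
a bijection from the vertices of `G` onto `{1, …, |V|}` such that the vertex labels of every
subgraph of `G` isomorphic to `H` sum to `c`. -/
def IsMagicVertexLabeling {V : Type*} [Fintype V] {W : Type*}
    (G : SimpleGraph V) (H : SimpleGraph W) (f : V → ℤ) (c : ℤ) : Prop :=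
  Set.BijOn f Set.univ (Set.Icc 1 (Fintype.card V : ℤ)) ∧
  ∀ G' : G.Subgraph, Nonempty (G'.coe ≃g H) → ∑ᶠ v ∈ G'.verts, f v = c

/-- `g` is an `H`-magic edge labeling of `G` with `H`-magic sum `c`:
a bijection from the edges of `G` onto `{1, …, |E|}` such that the edge labels of every
subgraph of `G` isomorphic to `H` sum to `c`. -/
def IsMagicEdgeLabeling {V : Type*} [Fintype V] {W : Type*}
    (G : SimpleGraph V) (H : SimpleGraph W) (g : Sym2 V → ℤ) (c : ℤ) : Prop :=
  Set.BijOn g G.edgeSet (Set.Icc 1 (G.edgeSet.ncard : ℤ)) ∧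
  ∀ G' : G.Subgraph, Nonempty (G'.coe ≃g H) → ∑ᶠ e ∈ G'.edgeSet, g e = c

/-- `G` admits an `H`-covering: every edge of `G` belongs to at least one subgraph of `G`
isomorphic to `H`. -/
def AdmitsCovering {V W : Type*} (G : SimpleGraph V) (H : SimpleGraph W) : Prop :=
  ∀ e ∈ G.edgeSet, ∃ G' : G.Subgraph, e ∈ G'.edgeSet ∧ Nonempty (G'.coe ≃g H)

/-- `(Fv, Fe)` is an `H`-supermagic labeling of `G` with `H`-supermagic sum `c`:
the vertex part is a bijection onto `{1, …, |V|}`, the edge part is a bijection from the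
edges onto `{|V|+1, …, |V|+|E|}` (together a bijection `V ∪ E → {1, …, |V|+|E|}` mapping `V`
onto `{1, …, |V|}`), and the labels of every subgraph isomorphic to `H` sum to `c`. -/
def IsSupermagicLabeling {V : Type*} [Fintype V] {W : Type*}
    (G : SimpleGraph V) (H : SimpleGraph W) (Fv : V → ℤ) (Fe : Sym2 V → ℤ) (c : ℤ) : Prop :=
  Set.BijOn Fv Set.univ (Set.Icc 1 (Fintype.card V : ℤ)) ∧
  Set.BijOn Fe G.edgeSet
    (Set.Icc ((Fintype.card V : ℤ) + 1) ((Fintype.card V : ℤ) + (G.edgeSet.ncard : ℤ))) ∧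
  ∀ G' : G.Subgraph, Nonempty (G'.coe ≃g H) →
    (∑ᶠ v ∈ G'.verts, Fv v) + (∑ᶠ e ∈ G'.edgeSet, Fe e) = c

/-- `G` is `H`-supermagic with `H`-supermagic sum `c`. -/
def IsSupermagic {V : Type*} [Fintype V] {W : Type*}
    (G : SimpleGraph V) (H : SimpleGraph W) (c : ℤ) : Prop :=
  AdmitsCovering G H ∧ ∃ Fv Fe, IsSupermagicLabeling G H Fv Fe c

/-- The embedding of the index set `Fin (d-1)` (the first `d-1` coordinates) into `Fin d`. -/
def restrIdx (d : ℕ) : Fin (d - 1) → Fin d := Fin.castLE (Nat.sub_le d 1)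

/-- The index of the last coordinate in `Fin d` (for `d ≥ 1`). -/
def lastIdx (d : ℕ) (hd : 1 ≤ d) : Fin d := ⟨d - 1, by omega⟩

/-- Restriction of a grid vertex to its first `d-1` coordinates: a vertex of the
`(d-1)`-dimensional grid `Grid(n 0, …, n (d-2))`. -/
def restrict {d : ℕ} {n : Fin d → ℕ} (x : ∀ i, Fin (n i)) :
    ∀ i : Fin (d - 1), Fin (n (restrIdx d i)) := fun i => x (restrIdx d i)

section Aux

variable {d : ℕ} {n : Fin d → ℕ}

/-- Extend a vertex of the `(d-1)`-dim grid by a last coordinate. -/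
def extendV (hd : 1 ≤ d) (v : ∀ i : Fin (d - 1), Fin (n (restrIdx d i)))
    (k : Fin (n (lastIdx d hd))) : ∀ i, Fin (n i) := fun i =>
  if h : (i : ℕ) < d - 1 then v ⟨i, h⟩
  else Fin.cast (by
    have hi := i.isLt
    exact congrArg n (Fin.ext (by simp [lastIdx]; omega))) k

lemma extendV_lt (hd : 1 ≤ d) (v : ∀ i : Fin (d - 1), Fin (n (restrIdx d i)))
    (k : Fin (n (lastIdx d hd))) (i : Fin d) (h : (i : ℕ) < d - 1) :
    extendV hd v k i = v ⟨i, h⟩ := dif_pos h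

lemma extendV_restr (hd : 1 ≤ d) (v : ∀ i : Fin (d - 1), Fin (n (restrIdx d i)))
    (k : Fin (n (lastIdx d hd))) (j : Fin (d - 1)) :
    extendV hd v k (restrIdx d j) = v j :=
  extendV_lt hd v k (restrIdx d j) j.isLt

lemma restrict_extendV (hd : 1 ≤ d) (v : ∀ i : Fin (d - 1), Fin (n (restrIdx d i)))
    (k : Fin (n (lastIdx d hd))) : restrict (extendV hd v k) = v :=
  funext fun j => extendV_restr hd v k j

lemma extendV_last (hd : 1 ≤ d) (v : ∀ i : Fin (d - 1), Fin (n (restrIdx d i)))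
    (k : Fin (n (lastIdx d hd))) : extendV hd v k (lastIdx d hd) = k := by
  have : ¬ ((lastIdx d hd : Fin d) : ℕ) < d - 1 := by simp [lastIdx]
  exact (dif_neg this).trans (Fin.ext rfl)

lemma ext_restr (hd : 1 ≤ d) {x y : ∀ i, Fin (n i)}
    (h1 : ∀ j : Fin (d - 1), x (restrIdx d j) = y (restrIdx d j))
    (h2 : ((x (lastIdx d hd)) : ℕ) = (y (lastIdx d hd) : ℕ)) : x = y := by
  funext i
  by_cases h : (i : ℕ) < d - 1
  · exact h1 ⟨i, h⟩
  · have hi : i = lastIdx d hd := Fin.ext (by simp [lastIdx]; omega)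
    rw [hi]
    exact Fin.ext h2

lemma grid_edge_rep {δ : ℕ} {m : Fin δ → ℕ} {e : Sym2 (∀ i, Fin (m i))}
    (he : e ∈ (gridGraph m).edgeSet) :
    ∃ a b i, e = s(a, b) ∧ ((a i : ℕ) + 1 = (b i : ℕ)) ∧ ∀ j, j ≠ i → a j = b j := by
  induction e using Sym2.ind with
  | _ a b =>
    rw [SimpleGraph.mem_edgeSet] at he
    obtain ⟨i, hor, hag⟩ := he
    rcases hor with h | h
    · exact ⟨a, b, i, rfl, h, hag⟩
    · exact ⟨b, a, i, Sym2.eq_swap, h, fun j hj => (hag j hj).symm⟩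

lemma add_mul_inj {a b s t Z : ℤ} (ha1 : 1 ≤ a) (ha2 : a ≤ Z) (hb1 : 1 ≤ b) (hb2 : b ≤ Z)
    (hs : 0 ≤ s) (ht : 0 ≤ t) (h : a + s * Z = b + t * Z) : a = b ∧ s = t := by
  have hZ : 1 ≤ Z := le_trans ha1 ha2
  have hst : s = t := by
    rcases lt_trichotomy s t with hlt | heq | hlt
    · nlinarith [mul_le_mul_of_nonneg_right (by linarith : s + 1 ≤ t) (by linarith : (0:ℤ) ≤ Z)]
    · exact heq
    · nlinarith [mul_le_mul_of_nonneg_right (by linarith : t + 1 ≤ s) (by linarith : (0:ℤ) ≤ Z)]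
  subst hst
  exact ⟨by linarith, rfl⟩

lemma decompInt {m K Z : ℤ} (hZ : 1 ≤ Z) (h1 : 1 ≤ m) (h2 : m ≤ K * Z) :
    ∃ t r : ℤ, 0 ≤ t ∧ t ≤ K - 1 ∧ 1 ≤ r ∧ r ≤ Z ∧ m = r + t * Z := by
  have h0 : 0 ≤ m - 1 := by linarith
  have hZ0 : Z ≠ 0 := by intro h; rw [h] at hZ; norm_num at hZ
  have hmod1 : 0 ≤ (m - 1) % Z := Int.emod_nonneg _ hZ0
  have hmod2 : (m - 1) % Z < Z := Int.emod_lt_of_pos _ (by linarith)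
  have hdm : Z * ((m - 1) / Z) + (m - 1) % Z = m - 1 := Int.mul_ediv_add_emod _ _
  have ht0 : 0 ≤ (m - 1) / Z := Int.ediv_nonneg h0 (by linarith)
  have hcm : ((m - 1) / Z) * Z = Z * ((m - 1) / Z) := mul_comm _ _
  refine ⟨(m - 1) / Z, (m - 1) % Z + 1, ht0, ?_, by linarith, by linarith, by linarith⟩
  by_contra hc
  have hK : K ≤ (m - 1) / Z := by linarith
  have h3 : K * Z ≤ ((m - 1) / Z) * Z := mul_le_mul_of_nonneg_right hK (by linarith)
  linarith

/-- The branch condition for horizontal edges. -/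
def CondBig {d : ℕ} {n : Fin d → ℕ} (i : Fin (d - 1)) (x : ∀ i, Fin (n i)) : Prop :=
  if Odd d ∨ (i : ℕ) + 1 ≤ d - 2 then Odd ((i : ℕ) + 1)
  else Odd (∑ j : Fin (d - 2), ((x (Fin.castLE (Nat.sub_le d 2) j) : ℕ) + 1))

lemma CondBig_congr {x1 x2 : ∀ i, Fin (n i)} (i : Fin (d - 1))
    (h : ∀ j : Fin (d - 2), (x1 (Fin.castLE (Nat.sub_le d 2) j) : ℕ)
      = (x2 (Fin.castLE (Nat.sub_le d 2) j) : ℕ)) :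
    CondBig i x1 ↔ CondBig i x2 := by
  unfold CondBig
  by_cases hP : Odd d ∨ (i : ℕ) + 1 ≤ d - 2
  · rw [if_pos hP, if_pos hP]
  · rw [if_neg hP, if_neg hP]
    have : (∑ j : Fin (d - 2), ((x1 (Fin.castLE (Nat.sub_le d 2) j) : ℕ) + 1))
        = ∑ j : Fin (d - 2), ((x2 (Fin.castLE (Nat.sub_le d 2) j) : ℕ) + 1) :=
      Finset.sum_congr rfl fun j _ => by rw [h j]
    rw [this]

/-- The branch condition expressed on the small grid. -/
def CondSmall {d : ℕ} {n : Fin d → ℕ} (i : Fin (d - 1))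
    (v : ∀ j : Fin (d - 1), Fin (n (restrIdx d j))) : Prop :=
  if Odd d ∨ (i : ℕ) + 1 ≤ d - 2 then Odd ((i : ℕ) + 1)
  else Odd (∑ j : Fin (d - 2), ((v (Fin.castLE (by omega : d - 2 ≤ d - 1) j) : ℕ) + 1))

lemma CondBig_extendV (hd : 1 ≤ d) (v : ∀ j : Fin (d - 1), Fin (n (restrIdx d j)))
    (k : Fin (n (lastIdx d hd))) (i : Fin (d - 1)) :
    CondBig i (extendV hd v k) ↔ CondSmall i v := by
  unfold CondBig CondSmall
  by_cases hP : Odd d ∨ (i : ℕ) + 1 ≤ d - 2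
  · rw [if_pos hP, if_pos hP]
  · rw [if_neg hP, if_neg hP]
    have hsum : (∑ j : Fin (d - 2), ((extendV hd v k (Fin.castLE (Nat.sub_le d 2) j) : ℕ) + 1))
        = ∑ j : Fin (d - 2), ((v (Fin.castLE (by omega : d - 2 ≤ d - 1) j) : ℕ) + 1) :=
      Finset.sum_congr rfl fun j _ => by
        have hjv := j.isLt
        have hlt : ((Fin.castLE (Nat.sub_le d 2) j : Fin d) : ℕ) < d - 1 := by
          have : ((Fin.castLE (Nat.sub_le d 2) j : Fin d) : ℕ) = (j : ℕ) := rfl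
          omega
        rw [extendV_lt hd v k _ hlt]
        rfl
    rw [hsum]

end Aux

set_option maxHeartbeats 1600000 in
/-- for `d ≥ 3`, if `f̃` is a bijection from the vertices of
`Grid(n 0, …, n (d-2))` onto `{1, …, N}` and `g̃` is a bijection from its edges onto
`{1, …, M}`, then the edge labeling `g` of `Grid(n 0, …, n (d-1))` defined by the formulas
of the paper is a bijection from the edge set of `Grid(n 0, …, n (d-1))` onto
`{1, …, n_d·M + (n_d-1)·N}`. -/
theorem induction_step_edge_labeling_bijective (d : ℕ) (hd : 3 ≤ d) (n : Fin d → ℕ)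
    (hn : ∀ i, 2 ≤ n i) (N M : ℕ)
    (hN : N = ∏ i : Fin (d - 1), n (restrIdx d i))
    (hM : M = (gridGraph fun i : Fin (d - 1) => n (restrIdx d i)).edgeSet.ncard)
    (ftil : (∀ i : Fin (d - 1), Fin (n (restrIdx d i))) → ℤ)
    (hftil : Set.BijOn ftil Set.univ (Set.Icc 1 (N : ℤ)))
    (gtil : Sym2 (∀ i : Fin (d - 1), Fin (n (restrIdx d i))) → ℤ)
    (hgtil : Set.BijOn gtil (gridGraph fun i : Fin (d - 1) => n (restrIdx d i)).edgeSet
      (Set.Icc 1 (M : ℤ)))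
    (g : Sym2 (∀ i, Fin (n i)) → ℤ)
    (hgvert : ∀ x y : ∀ i, Fin (n i),
      (∀ j : Fin (d - 1), x (restrIdx d j) = y (restrIdx d j)) →
      (x (lastIdx d (by omega)) : ℕ) + 1 = (y (lastIdx d (by omega)) : ℕ) →
      g s(x, y) = ftil (restrict x) + (n (lastIdx d (by omega)) : ℤ) * M +
        (if Odd (∑ j : Fin (d - 1), ((x (restrIdx d j) : ℕ) + 1)) then
          ((x (lastIdx d (by omega)) : ℕ) : ℤ) * N
        else
          ((n (lastIdx d (by omega)) : ℤ) - 1 -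
            (((x (lastIdx d (by omega)) : ℕ) : ℤ) + 1)) * N))
    (hghor : ∀ (x y : ∀ i, Fin (n i)) (i : Fin (d - 1)),
      (x (restrIdx d i) : ℕ) + 1 = (y (restrIdx d i) : ℕ) →
      (∀ j, j ≠ restrIdx d i → x j = y j) →
      g s(x, y) = gtil s(restrict x, restrict y) +
        (if Odd d ∨ (i : ℕ) + 1 ≤ d - 2 then
          (if Odd ((i : ℕ) + 1) then ((x (lastIdx d (by omega)) : ℕ) : ℤ) * M
          else
            ((n (lastIdx d (by omega)) : ℤ) -
              (((x (lastIdx d (by omega)) : ℕ) : ℤ) + 1)) * M)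
        else
          (if Odd (∑ j : Fin (d - 2), ((x (Fin.castLE (Nat.sub_le d 2) j) : ℕ) + 1)) then
            ((x (lastIdx d (by omega)) : ℕ) : ℤ) * M
          else
            ((n (lastIdx d (by omega)) : ℤ) -
              (((x (lastIdx d (by omega)) : ℕ) : ℤ) + 1)) * M))) :
    Set.BijOn g (gridGraph n).edgeSet
      (Set.Icc 1 ((n (lastIdx d (by omega)) * M +
        (n (lastIdx d (by omega)) - 1) * N : ℕ) : ℤ)) := by
  classical
  have hd1 : 1 ≤ d := by omega
  have hnL : 2 ≤ n (lastIdx d hd1) := hn _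
  have hMnn : (0 : ℤ) ≤ (M : ℤ) := by positivity
  have hNnn : (0 : ℤ) ≤ (N : ℤ) := by positivity
  -- N ≥ 1
  have hN1 : (1 : ℤ) ≤ (N : ℤ) := by
    have h := hftil.1 (Set.mem_univ (fun i => ⟨0, by have := hn (restrIdx d i); omega⟩ :
      ∀ i : Fin (d - 1), Fin (n (restrIdx d i))))
    rw [Set.mem_Icc] at h
    linarith [h.1, h.2]
  -- M ≥ 1
  have hM1 : (1 : ℤ) ≤ (M : ℤ) := by
    have hadj : (gridGraph fun i : Fin (d - 1) => n (restrIdx d i)).Adj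
        (fun i => ⟨0, by have := hn (restrIdx d i); omega⟩)
        (Function.update (fun i => ⟨0, by have := hn (restrIdx d i); omega⟩)
          ⟨0, by omega⟩ ⟨1, by have := hn (restrIdx d ⟨0, by omega⟩); omega⟩) := by
      refine ⟨⟨0, by omega⟩, Or.inl ?_, fun j hj => ?_⟩
      · rw [Function.update_self]
      · rw [Function.update_of_ne hj]
    have h := hgtil.1 ((SimpleGraph.mem_edgeSet _).2 hadj)
    rw [Set.mem_Icc] at h
    linarith [h.1, h.2]
  -- cast of the target upper bound
  have hcast : ((n (lastIdx d hd1) * M + (n (lastIdx d hd1) - 1) * N : ℕ) : ℤ)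
      = (n (lastIdx d hd1) : ℤ) * M + ((n (lastIdx d hd1) : ℤ) - 1) * N := by
    rw [Nat.cast_add, Nat.cast_mul, Nat.cast_mul, Nat.cast_sub (by omega)]
    norm_num
  -- value lemma for horizontal edges
  have hVal_H : ∀ (x y : ∀ i, Fin (n i)) (i : Fin (d - 1)),
      ((x (restrIdx d i) : ℕ) + 1 = (y (restrIdx d i) : ℕ)) →
      (∀ j, j ≠ restrIdx d i → x j = y j) →
      s(restrict x, restrict y) ∈
        (gridGraph fun j : Fin (d - 1) => n (restrIdx d j)).edgeSet ∧
      ∃ s : ℤ, 0 ≤ s ∧ s ≤ (n (lastIdx d hd1) : ℤ) - 1 ∧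
        g s(x, y) = gtil s(restrict x, restrict y) + s * M ∧
        1 ≤ g s(x, y) ∧ g s(x, y) ≤ (n (lastIdx d hd1) : ℤ) * M ∧
        (CondBig i x → s = ((x (lastIdx d hd1) : ℕ) : ℤ)) ∧
        (¬ CondBig i x → s = (n (lastIdx d hd1) : ℤ) - 1 - ((x (lastIdx d hd1) : ℕ) : ℤ)) := by
    intro x y i hx hag
    have hmem : s(restrict x, restrict y) ∈
        (gridGraph fun j : Fin (d - 1) => n (restrIdx d j)).edgeSet :=
      (SimpleGraph.mem_edgeSet _).2
        ⟨i, Or.inl hx, fun j hj => hag _ fun hc => hj (Fin.castLE_injective _ hc)⟩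
    refine ⟨hmem, ?_⟩
    have hgt := hgtil.1 hmem
    rw [Set.mem_Icc] at hgt
    have hxL : (x (lastIdx d hd1) : ℕ) < n (lastIdx d hd1) := (x _).isLt
    have hval : g s(x, y) = gtil s(restrict x, restrict y) +
        (if CondBig i x then ((x (lastIdx d hd1) : ℕ) : ℤ)
          else (n (lastIdx d hd1) : ℤ) - 1 - ((x (lastIdx d hd1) : ℕ) : ℤ)) * M := by
      rw [hghor x y i hx hag]
      unfold CondBig
      by_cases hP : Odd d ∨ (i : ℕ) + 1 ≤ d - 2
      · rw [if_pos hP, if_pos hP]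
        by_cases hA : Odd ((i : ℕ) + 1)
        · rw [if_pos hA, if_pos hA]
        · rw [if_neg hA, if_neg hA]; ring
      · rw [if_neg hP, if_neg hP]
        by_cases hA : Odd (∑ j : Fin (d - 2), ((x (Fin.castLE (Nat.sub_le d 2) j) : ℕ) + 1))
        · rw [if_pos hA, if_pos hA]
        · rw [if_neg hA, if_neg hA]; ring
    set s : ℤ := if CondBig i x then ((x (lastIdx d hd1) : ℕ) : ℤ)
      else (n (lastIdx d hd1) : ℤ) - 1 - ((x (lastIdx d hd1) : ℕ) : ℤ) with hsdef
    have hs0 : 0 ≤ s := by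
      rw [hsdef]
      split_ifs
      · positivity
      · push_cast
        omega
    have hs1 : s ≤ (n (lastIdx d hd1) : ℤ) - 1 := by
      rw [hsdef]; split_ifs <;> push_cast <;> omega
    have hsM : s * M ≤ ((n (lastIdx d hd1) : ℤ) - 1) * M :=
      mul_le_mul_of_nonneg_right hs1 hMnn
    have hring : ((n (lastIdx d hd1) : ℤ) - 1) * M + M = (n (lastIdx d hd1) : ℤ) * M := by ring
    refine ⟨s, hs0, hs1, hval, ?_, ?_, ?_, ?_⟩
    · rw [hval]; nlinarith [mul_nonneg hs0 hMnn]
    · rw [hval]; linarith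
    · intro hC; rw [hsdef, if_pos hC]
    · intro hC; rw [hsdef, if_neg hC]
  -- value lemma for vertical edges
  have hVal_V : ∀ x y : ∀ i, Fin (n i),
      (∀ j : Fin (d - 1), x (restrIdx d j) = y (restrIdx d j)) →
      ((x (lastIdx d hd1) : ℕ) + 1 = (y (lastIdx d hd1) : ℕ)) →
      ∃ s : ℤ, 0 ≤ s ∧ s ≤ (n (lastIdx d hd1) : ℤ) - 2 ∧
        g s(x, y) = ftil (restrict x) + (n (lastIdx d hd1) : ℤ) * M + s * N ∧
        (n (lastIdx d hd1) : ℤ) * M + 1 ≤ g s(x, y) ∧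
        g s(x, y) ≤ (n (lastIdx d hd1) : ℤ) * M + ((n (lastIdx d hd1) : ℤ) - 1) * N ∧
        (Odd (∑ j : Fin (d - 1), ((x (restrIdx d j) : ℕ) + 1)) →
          s = ((x (lastIdx d hd1) : ℕ) : ℤ)) ∧
        (¬ Odd (∑ j : Fin (d - 1), ((x (restrIdx d j) : ℕ) + 1)) →
          s = (n (lastIdx d hd1) : ℤ) - 2 - ((x (lastIdx d hd1) : ℕ) : ℤ)) := by
    intro x y h1 h2
    have hf := hftil.1 (Set.mem_univ (restrict x))
    rw [Set.mem_Icc] at hf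
    have hyL : (y (lastIdx d hd1) : ℕ) < n (lastIdx d hd1) := (y _).isLt
    have hxL : (x (lastIdx d hd1) : ℕ) ≤ n (lastIdx d hd1) - 2 := by omega
    have hval : g s(x, y) = ftil (restrict x) + (n (lastIdx d hd1) : ℤ) * M +
        (if Odd (∑ j : Fin (d - 1), ((x (restrIdx d j) : ℕ) + 1)) then
          ((x (lastIdx d hd1) : ℕ) : ℤ)
        else (n (lastIdx d hd1) : ℤ) - 2 - ((x (lastIdx d hd1) : ℕ) : ℤ)) * N := by
      rw [hgvert x y h1 h2]
      by_cases hA : Odd (∑ j : Fin (d - 1), ((x (restrIdx d j) : ℕ) + 1))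
      · rw [if_pos hA, if_pos hA]
      · rw [if_neg hA, if_neg hA]; ring
    set s : ℤ := if Odd (∑ j : Fin (d - 1), ((x (restrIdx d j) : ℕ) + 1)) then
        ((x (lastIdx d hd1) : ℕ) : ℤ)
      else (n (lastIdx d hd1) : ℤ) - 2 - ((x (lastIdx d hd1) : ℕ) : ℤ) with hsdef
    have hs0 : 0 ≤ s := by
      rw [hsdef]
      split_ifs
      · positivity
      · push_cast
        omega
    have hs1 : s ≤ (n (lastIdx d hd1) : ℤ) - 2 := by
      rw [hsdef]; split_ifs <;> push_cast <;> omega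
    have hsN : s * N ≤ ((n (lastIdx d hd1) : ℤ) - 2) * N :=
      mul_le_mul_of_nonneg_right hs1 hNnn
    have hring : ((n (lastIdx d hd1) : ℤ) - 2) * N + N = ((n (lastIdx d hd1) : ℤ) - 1) * N := by
      ring
    refine ⟨s, hs0, hs1, hval, ?_, ?_, ?_, ?_⟩
    · rw [hval]; nlinarith [mul_nonneg hs0 hNnn]
    · rw [hval]; linarith
    · intro hC; rw [hsdef, if_pos hC]
    · intro hC; rw [hsdef, if_neg hC]
  refine ⟨?_, ?_, ?_⟩
  -- MapsTo
  · intro e he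
    obtain ⟨x, y, i, rfl, hxy, hag⟩ := grid_edge_rep he
    rw [Set.mem_Icc, hcast]
    by_cases hi : (i : ℕ) < d - 1
    · obtain ⟨-, s, -, -, -, hg1, hg2, -, -⟩ := hVal_H x y ⟨i, hi⟩ hxy hag
      have hNn : (0 : ℤ) ≤ ((n (lastIdx d hd1) : ℤ) - 1) * N :=
        mul_nonneg (by push_cast; omega) hNnn
      exact ⟨hg1, by linarith⟩
    · have hilt := i.isLt
      have hiL : i = lastIdx d hd1 := Fin.ext (show (i : ℕ) = d - 1 by omega)
      subst hiL
      have h1 : ∀ j : Fin (d - 1), x (restrIdx d j) = y (restrIdx d j) := fun j =>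
        hag _ (fun hc => by
          have hj := j.isLt
          have hc' : (j : ℕ) = d - 1 := congrArg Fin.val hc
          omega)
      obtain ⟨s, -, -, -, hg1, hg2, -, -⟩ := hVal_V x y h1 hxy
      have hMM : (0 : ℤ) ≤ (n (lastIdx d hd1) : ℤ) * M := by positivity
      exact ⟨by linarith, hg2⟩
  -- InjOn
  · intro e1 he1 e2 he2 hg12
    obtain ⟨x1, y1, i1, rfl, hxy1, hag1⟩ := grid_edge_rep he1
    obtain ⟨x2, y2, i2, rfl, hxy2, hag2⟩ := grid_edge_rep he2
    by_cases hi1 : (i1 : ℕ) < d - 1 <;> by_cases hi2 : (i2 : ℕ) < d - 1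
    -- both horizontal
    · obtain ⟨hmem1, s1, hs10, hs11, hval1, -, -, hC1p, hC1n⟩ := hVal_H x1 y1 ⟨i1, hi1⟩ hxy1 hag1
      obtain ⟨hmem2, s2, hs20, hs21, hval2, -, -, hC2p, hC2n⟩ := hVal_H x2 y2 ⟨i2, hi2⟩ hxy2 hag2
      rw [hval1, hval2] at hg12
      have hb1 := hgtil.1 hmem1
      rw [Set.mem_Icc] at hb1
      have hb2 := hgtil.1 hmem2
      rw [Set.mem_Icc] at hb2
      obtain ⟨heq, hseq⟩ := add_mul_inj hb1.1 hb1.2 hb2.1 hb2.2 hs10 hs20 hg12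
      have hE : s(restrict x1, restrict y1) = s(restrict x2, restrict y2) :=
        hgtil.2.1 hmem1 hmem2 heq
      rcases Sym2.eq_iff.1 hE with ⟨hxx, hyy⟩ | ⟨hxy', hyx'⟩
      · -- straight case
        by_cases hii : i1 = i2
        · subst hii
          have hC12 : ∀ j : Fin (d - 2), (x1 (Fin.castLE (Nat.sub_le d 2) j) : ℕ)
              = (x2 (Fin.castLE (Nat.sub_le d 2) j) : ℕ) := fun j =>
            congrArg Fin.val (congrFun hxx (Fin.castLE (by omega : d - 2 ≤ d - 1) j))
          have hCiff : CondBig (⟨i1, hi1⟩ : Fin (d - 1)) x1 ↔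
              CondBig (⟨i1, hi1⟩ : Fin (d - 1)) x2 := CondBig_congr _ hC12
          have hxLeq : (x1 (lastIdx d hd1) : ℕ) = (x2 (lastIdx d hd1) : ℕ) := by
            by_cases hC : CondBig (⟨i1, hi1⟩ : Fin (d - 1)) x1
            · have q1 := hC1p hC
              have q2 := hC2p (hCiff.1 hC)
              rw [q1, q2] at hseq
              exact_mod_cast hseq
            · have q1 := hC1n hC
              have q2 := hC2n (fun hc => hC (hCiff.2 hc))
              rw [q1, q2] at hseq
              omega
          have hx12 : x1 = x2 := ext_restr hd1 (fun j => congrFun hxx j) hxLeq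
          have hneL : lastIdx d hd1 ≠ restrIdx d (⟨i1, hi1⟩ : Fin (d - 1)) := fun hc => by
            have hc' : d - 1 = (i1 : ℕ) := congrArg Fin.val hc
            omega
          have ha1 : (x1 (lastIdx d hd1) : ℕ) = (y1 (lastIdx d hd1) : ℕ) :=
            congrArg Fin.val (hag1 _ hneL)
          have ha2 : (x2 (lastIdx d hd1) : ℕ) = (y2 (lastIdx d hd1) : ℕ) :=
            congrArg Fin.val (hag2 _ hneL)
          have hy12 : y1 = y2 := ext_restr hd1 (fun j => congrFun hyy j) (by omega)
          rw [hx12, hy12]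
        · exfalso
          have h12 : (x2 i1 : ℕ) = (y2 i1 : ℕ) :=
            congrArg Fin.val (hag2 i1 (fun hc => hii hc))
          have e1 : (x1 i1 : ℕ) = (x2 i1 : ℕ) := congrArg Fin.val (congrFun hxx ⟨i1, hi1⟩)
          have e2 : (y1 i1 : ℕ) = (y2 i1 : ℕ) := congrArg Fin.val (congrFun hyy ⟨i1, hi1⟩)
          omega
      · -- crossed case: contradiction
        exfalso
        have ex1 : (x1 i1 : ℕ) = (y2 i1 : ℕ) := congrArg Fin.val (congrFun hxy' ⟨i1, hi1⟩)
        have ey1 : (y1 i1 : ℕ) = (x2 i1 : ℕ) := congrArg Fin.val (congrFun hyx' ⟨i1, hi1⟩)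
        by_cases hii : i1 = i2
        · subst hii
          omega
        · have h12 : (x2 i1 : ℕ) = (y2 i1 : ℕ) :=
            congrArg Fin.val (hag2 i1 (fun hc => hii hc))
          omega
    -- e1 horizontal, e2 vertical
    · exfalso
      obtain ⟨-, s1, -, -, -, -, hg12', -, -⟩ := hVal_H x1 y1 ⟨i1, hi1⟩ hxy1 hag1
      have hilt := i2.isLt
      have hiL : i2 = lastIdx d hd1 := Fin.ext (show (i2 : ℕ) = d - 1 by omega)
      subst hiL
      have h1 : ∀ j : Fin (d - 1), x2 (restrIdx d j) = y2 (restrIdx d j) := fun j =>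
        hag2 _ (fun hc => by
          have hj := j.isLt
          have hc' : (j : ℕ) = d - 1 := congrArg Fin.val hc
          omega)
      obtain ⟨s2, -, -, -, hg21, -, -, -⟩ := hVal_V x2 y2 h1 hxy2
      have hMM : (0 : ℤ) ≤ (n (lastIdx d hd1) : ℤ) * M := by positivity
      linarith
    -- e1 vertical, e2 horizontal
    · exfalso
      obtain ⟨-, s2, -, -, -, -, hg22', -, -⟩ := hVal_H x2 y2 ⟨i2, hi2⟩ hxy2 hag2
      have hilt := i1.isLt
      have hiL : i1 = lastIdx d hd1 := Fin.ext (show (i1 : ℕ) = d - 1 by omega)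
      subst hiL
      have h1 : ∀ j : Fin (d - 1), x1 (restrIdx d j) = y1 (restrIdx d j) := fun j =>
        hag1 _ (fun hc => by
          have hj := j.isLt
          have hc' : (j : ℕ) = d - 1 := congrArg Fin.val hc
          omega)
      obtain ⟨s1, -, -, -, hg11, -, -, -⟩ := hVal_V x1 y1 h1 hxy1
      have hMM : (0 : ℤ) ≤ (n (lastIdx d hd1) : ℤ) * M := by positivity
      linarith
    -- both vertical
    · have hilt1 := i1.isLt
      have hiL1 : i1 = lastIdx d hd1 := Fin.ext (show (i1 : ℕ) = d - 1 by omega)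
      subst hiL1
      have hilt2 := i2.isLt
      have hiL2 : i2 = lastIdx d hd1 := Fin.ext (show (i2 : ℕ) = d - 1 by omega)
      subst hiL2
      have h11 : ∀ j : Fin (d - 1), x1 (restrIdx d j) = y1 (restrIdx d j) := fun j =>
        hag1 _ (fun hc => by
          have hj := j.isLt
          have hc' : (j : ℕ) = d - 1 := congrArg Fin.val hc
          omega)
      have h12 : ∀ j : Fin (d - 1), x2 (restrIdx d j) = y2 (restrIdx d j) := fun j =>
        hag2 _ (fun hc => by
          have hj := j.isLt
          have hc' : (j : ℕ) = d - 1 := congrArg Fin.val hc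
          omega)
      obtain ⟨s1, hs10, hs11, hval1, -, -, hP1p, hP1n⟩ := hVal_V x1 y1 h11 hxy1
      obtain ⟨s2, hs20, hs21, hval2, -, -, hP2p, hP2n⟩ := hVal_V x2 y2 h12 hxy2
      rw [hval1, hval2] at hg12
      have hf1 := hftil.1 (Set.mem_univ (restrict x1))
      rw [Set.mem_Icc] at hf1
      have hf2 := hftil.1 (Set.mem_univ (restrict x2))
      rw [Set.mem_Icc] at hf2
      have hg12' : ftil (restrict x1) + s1 * N = ftil (restrict x2) + s2 * N := by linarith
      obtain ⟨heq, hseq⟩ := add_mul_inj hf1.1 hf1.2 hf2.1 hf2.2 hs10 hs20 hg12'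
      have hv12 : restrict x1 = restrict x2 :=
        hftil.2.1 (Set.mem_univ _) (Set.mem_univ _) heq
      have hpar : (∑ j : Fin (d - 1), ((x1 (restrIdx d j) : ℕ) + 1))
          = ∑ j : Fin (d - 1), ((x2 (restrIdx d j) : ℕ) + 1) :=
        Finset.sum_congr rfl fun j _ => by
          have : (x1 (restrIdx d j) : ℕ) = (x2 (restrIdx d j) : ℕ) :=
            congrArg Fin.val (congrFun hv12 j)
          omega
      have hxLeq : (x1 (lastIdx d hd1) : ℕ) = (x2 (lastIdx d hd1) : ℕ) := by
        by_cases hO : Odd (∑ j : Fin (d - 1), ((x1 (restrIdx d j) : ℕ) + 1))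
        · have q1 := hP1p hO
          have q2 := hP2p (hpar ▸ hO)
          rw [q1, q2] at hseq
          exact_mod_cast hseq
        · have q1 := hP1n hO
          have q2 := hP2n (fun hc => hO (by rw [hpar]; exact hc))
          rw [q1, q2] at hseq
          omega
      have hx12 : x1 = x2 := ext_restr hd1 (fun j => congrFun hv12 j) hxLeq
      have hy12 : y1 = y2 := by
        refine ext_restr hd1 (fun j => ?_) (by omega)
        have a1 : (x1 (restrIdx d j) : ℕ) = (y1 (restrIdx d j) : ℕ) :=
          congrArg Fin.val (h11 j)
        have a2 : (x2 (restrIdx d j) : ℕ) = (y2 (restrIdx d j) : ℕ) :=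
          congrArg Fin.val (h12 j)
        have a3 : (x1 (restrIdx d j) : ℕ) = (x2 (restrIdx d j) : ℕ) :=
          congrArg Fin.val (congrFun hv12 j)
        exact Fin.ext (by omega)
      rw [hx12, hy12]
  -- SurjOn
  · intro m hm
    rw [Set.mem_Icc, hcast] at hm
    by_cases hm' : m ≤ (n (lastIdx d hd1) : ℤ) * M
    · -- horizontal edge
      obtain ⟨t, r, ht0, ht1, hr1, hr2, hmrt⟩ := decompInt hM1 hm.1 hm'
      obtain ⟨etil, hemem, heval⟩ := hgtil.2.2 (Set.mem_Icc.2 ⟨hr1, hr2⟩)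
      obtain ⟨a, b, i, rfl, hab, habag⟩ := grid_edge_rep hemem
      set k : ℕ := if CondSmall i a then t.toNat else n (lastIdx d hd1) - 1 - t.toNat
        with hkdef
      have hkb : k < n (lastIdx d hd1) := by
        rw [hkdef]
        split_ifs <;> omega
      set x := extendV hd1 a ⟨k, hkb⟩ with hxdef
      set y := extendV hd1 b ⟨k, hkb⟩ with hydef
      clear_value x y k
      have hx : (x (restrIdx d i) : ℕ) + 1 = (y (restrIdx d i) : ℕ) := by
        rw [hxdef, hydef, extendV_restr, extendV_restr]
        exact hab
      have hagxy : ∀ j, j ≠ restrIdx d i → x j = y j := by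
        intro j hj
        by_cases hjlt : (j : ℕ) < d - 1
        · rw [hxdef, hydef, extendV_lt hd1 a _ j hjlt, extendV_lt hd1 b _ j hjlt]
          exact habag ⟨j, hjlt⟩ (fun hc => hj (congrArg (restrIdx d) hc))
        · have hjv := j.isLt
          have hjL : j = lastIdx d hd1 := Fin.ext (show (j : ℕ) = d - 1 by omega)
          rw [hxdef, hydef, hjL, extendV_last, extendV_last]
      refine ⟨s(x, y), (SimpleGraph.mem_edgeSet _).2 ⟨restrIdx d i, Or.inl hx, hagxy⟩, ?_⟩
      obtain ⟨-, s, -, -, hval, -, -, hCp, hCn⟩ := hVal_H x y i hx hagxy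
      have hres : s(restrict x, restrict y) = s(a, b) := by
        rw [hxdef, hydef, restrict_extendV, restrict_extendV]
      rw [hval, hres, heval]
      have hxL : (x (lastIdx d hd1) : ℕ) = k := by rw [hxdef, extendV_last]
      have hCiff : CondBig i x ↔ CondSmall i a := by
        rw [hxdef]
        exact CondBig_extendV hd1 a _ i
      by_cases hC : CondSmall i a
      · have hs := hCp (hCiff.2 hC)
        have hk : k = t.toNat := by rw [hkdef, if_pos hC]
        have hst : s = t := by rw [hs, hxL, hk]; omega
        have h5 : s * (M : ℤ) = t * M := congrArg (fun z : ℤ => z * (M : ℤ)) hst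
        linarith [hmrt, h5]
      · have hs := hCn (fun hc => hC (hCiff.1 hc))
        have hk : k = n (lastIdx d hd1) - 1 - t.toNat := by rw [hkdef, if_neg hC]
        have hst : s = t := by rw [hs, hxL, hk]; omega
        have h5 : s * (M : ℤ) = t * M := congrArg (fun z : ℤ => z * (M : ℤ)) hst
        linarith [hmrt, h5]
    · -- vertical edge
      push_neg at hm'
      obtain ⟨t, r, ht0, ht1, hr1, hr2, hmrt⟩ :=
        decompInt hN1 (show (1 : ℤ) ≤ m - (n (lastIdx d hd1) : ℤ) * M by linarith)
          (show m - (n (lastIdx d hd1) : ℤ) * M ≤ ((n (lastIdx d hd1) : ℤ) - 1) * N by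
            linarith [hm.2])
      obtain ⟨v, -, hveq⟩ := hftil.2.2 (Set.mem_Icc.2 ⟨hr1, hr2⟩)
      set k : ℕ := if Odd (∑ j : Fin (d - 1), ((v j : ℕ) + 1)) then t.toNat
        else n (lastIdx d hd1) - 2 - t.toNat with hkdef
      have hkb : k < n (lastIdx d hd1) := by
        rw [hkdef]
        split_ifs <;> omega
      have hkb1 : k + 1 < n (lastIdx d hd1) := by
        rw [hkdef]
        split_ifs <;> omega
      set x := extendV hd1 v ⟨k, hkb⟩ with hxdef
      set y := extendV hd1 v ⟨k + 1, hkb1⟩ with hydef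
      clear_value x y k
      have h1 : ∀ j : Fin (d - 1), x (restrIdx d j) = y (restrIdx d j) := fun j => by
        rw [hxdef, hydef, extendV_restr, extendV_restr]
      have h2 : (x (lastIdx d hd1) : ℕ) + 1 = (y (lastIdx d hd1) : ℕ) := by
        rw [hxdef, hydef, extendV_last, extendV_last]
      have hadj : (gridGraph n).Adj x y := ⟨lastIdx d hd1, Or.inl h2, fun j hj => by
        have hjv := j.isLt
        have hjlt : (j : ℕ) < d - 1 := by
          rcases Nat.lt_or_ge (j : ℕ) (d - 1) with h | h
          · exact h
          · exact absurd (Fin.ext (show (j : ℕ) = d - 1 by omega)) hj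
        rw [hxdef, hydef, extendV_lt hd1 v _ j hjlt, extendV_lt hd1 v _ j hjlt]⟩
      refine ⟨s(x, y), (SimpleGraph.mem_edgeSet _).2 hadj, ?_⟩
      obtain ⟨s, -, -, hval, -, -, hPp, hPn⟩ := hVal_V x y h1 h2
      have hresx : restrict x = v := by
        rw [hxdef]
        exact restrict_extendV hd1 v _
      have hsum : (∑ j : Fin (d - 1), ((x (restrIdx d j) : ℕ) + 1))
          = ∑ j : Fin (d - 1), ((v j : ℕ) + 1) :=
        Finset.sum_congr rfl fun j _ => by
          rw [show x (restrIdx d j) = v j from by rw [hxdef]; exact extendV_restr hd1 v _ j]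
      rw [hval, hresx, hveq]
      have hxL : (x (lastIdx d hd1) : ℕ) = k := by rw [hxdef, extendV_last]
      by_cases hO : Odd (∑ j : Fin (d - 1), ((v j : ℕ) + 1))
      · have hs := hPp (by rw [hsum]; exact hO)
        have hk : k = t.toNat := by rw [hkdef, if_pos hO]
        have hst : s = t := by rw [hs, hxL, hk]; omega
        have h5 : s * (N : ℤ) = t * N := congrArg (fun z : ℤ => z * (N : ℤ)) hst
        linarith [hmrt, h5]
      · have hs := hPn (fun hc => hO (hsum ▸ hc))
        have hk : k = n (lastIdx d hd1) - 2 - t.toNat := by rw [hkdef, if_neg hO]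
        have hst : s = t := by rw [hs, hxL, hk]; omega
        have h5 : s * (N : ℤ) = t * N := congrArg (fun z : ℤ => z * (N : ℤ)) hst
        linarith [hmrt, h5]
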